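/- Let (G_l,...,G_1) be a polynomial complex over S with column degree table (a_l,...,a_1), and let C = Im(G_1) ⊆ S^q. Then (G_l,...,G_1) has the PD property if and only if Im(G_1^H) = C^H and the homogenized complex 0 → T^{p_l}(−a_l) → ... → T^{p_1}(−a_1) → T^q is an exact sequence of graded T-modules. -/

import Mathlib

open MvPolynomial

noncomputable section

/-- Polynomials of total degree at most `d`. -/
def polyDegLE (F : Type) [Field F] (n : ℕ) (d : ℤ) :
    Submodule F (MvPolynomial (Fin n) F) where
  carrier := {f | ∀ m ∈ f.support, ((m.sum fun _ e => e : ℕ) : ℤ) ≤ d}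
  add_mem' := fun hf hg m hm =>
    (Finset.mem_union.1 (MvPolynomial.support_add hm)).elim (hf m) (hg m)
  zero_mem' := by simp
  smul_mem' := fun c f hf m hm => hf m (MvPolynomial.support_smul hm)

/-- The filtration `S^p[-a]_{≤ d}`. -/
def filt (F : Type) [Field F] (n p : ℕ) (a : Fin p → ℕ) (d : ℤ) :
    Submodule F (Fin p → MvPolynomial (Fin n) F) :=
  Submodule.pi Set.univ fun i => polyDegLE F n (d - a i)

/-- Homogenization in degree `d` : `f(D) ↦ D₀^d f(D/D₀)`, `D₀` being variable `0`. -/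
def homogL (F : Type) [Field F] (n : ℕ) (d : ℕ) :
    MvPolynomial (Fin n) F →ₗ[F] MvPolynomial (Fin (n+1)) F :=
  ∑ k ∈ Finset.range (d+1),
    (LinearMap.mulLeft F ((X 0 : MvPolynomial (Fin (n+1)) F) ^ (d-k))).comp
      ((homogeneousComponent k).comp (rename (Fin.succ)).toLinearMap)

/-- Componentwise homogenization in degree `d` of vectors, `S^q_{≤d} → T^q_d`. -/
def vecHomog (F : Type) [Field F] (n q d : ℕ) :
    (Fin q → MvPolynomial (Fin n) F) →ₗ[F] (Fin q → MvPolynomial (Fin (n+1)) F) :=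
  LinearMap.pi fun i => (homogL F n d).comp (LinearMap.proj i)

/-- `C_{≤d} = C ∩ S^q_{≤d}`, as an `F`-subspace of `S^q`. -/
def codeLE (F : Type) [Field F] (n q : ℕ)
    (C : Submodule (MvPolynomial (Fin n) F) (Fin q → MvPolynomial (Fin n) F))
    (d : ℤ) : Submodule F (Fin q → MvPolynomial (Fin n) F) :=
  (C.restrictScalars F) ⊓ filt F n q (fun _ => 0) d

/-- `C^H_d` : the image of `C_{≤d}` under the degree-`d` homogenization. -/
def CHd (F : Type) [Field F] (n q : ℕ)
    (C : Submodule (MvPolynomial (Fin n) F) (Fin q → MvPolynomial (Fin n) F))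
    (d : ℕ) : Submodule F (Fin q → MvPolynomial (Fin (n+1)) F) :=
  Submodule.map (vecHomog F n q d) (codeLE F n q C (d : ℤ))

/-- The homogenization `C^H = ⊕_{d ≥ 0} C^H_d` of the code `C` (as a subspace of
`T^q`, its carrier is the sum of the spaces `C^H_d`). -/
def CH (F : Type) [Field F] (n q : ℕ)
    (C : Submodule (MvPolynomial (Fin n) F) (Fin q → MvPolynomial (Fin n) F)) :
    Submodule F (Fin q → MvPolynomial (Fin (n+1)) F) :=
  ⨆ d : ℕ, CHd F n q C d

open scoped Classical

/-- The `a`-degree of the `j`-th column of a matrix `G` with no zero columns. -/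
def colDeg {F : Type} [Field F] {n p r : ℕ} (a : Fin p → ℕ)
    (G : Matrix (Fin p) (Fin r) (MvPolynomial (Fin n) F)) (j : Fin r) : ℕ :=
  Finset.univ.sup fun i => if G i j = 0 then 0 else a i + (G i j).totalDegree

/-- The homogenization `G^H` of a matrix `G` relative to the degree functions
`a, a'` : the `(r,c)` entry is `D₀^{a' c − a r} (G r c)(D/D₀)`. -/
def homogMatrix (F : Type) [Field F] (n : ℕ) {p p' : ℕ}
    (a : Fin p → ℕ) (a' : Fin p' → ℕ)
    (G : Matrix (Fin p) (Fin p') (MvPolynomial (Fin n) F)) :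
    Matrix (Fin p) (Fin p') (MvPolynomial (Fin (n+1)) F) :=
  fun r c => homogL F n (a' c - a r) (G r c)

/-!
Homogenization in degree `d`, `f ↦ D₀^d f(D/D₀)`, is an `F`-linear bijection from the polynomials
of degree `≤ d` onto the forms of degree `d`, with inverse `D₀ ↦ 1`, and it is multiplicative.
Applied entrywise with the shifts `a`, it identifies `S^p[-a]_{≤d}` with the degree-`d` part of
`T^p(-a)`, and the column degree bound `a r + deg G_{rc} ≤ a' c` makes it intertwine `G` with
`G^H`. Since `G^H` preserves the grading and every vector of `T^p(-a)` is the sum of its graded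
parts, exactness, injectivity and the image of the homogenized complex can be tested degree by
degree, where they are exactly the conditions of the PD property.
-/

open scoped Matrix

namespace PDProperty

section Homogeneous

variable {σ R : Type*} [CommSemiring R]

theorem sum_range_homogeneousComponent (φ : MvPolynomial σ R) {N : ℕ}
    (h : φ.totalDegree < N) : ∑ k ∈ Finset.range N, homogeneousComponent k φ = φ := by
  calc ∑ k ∈ Finset.range N, homogeneousComponent k φ
      = ∑ k ∈ Finset.range (φ.totalDegree + 1), homogeneousComponent k φ :=
        (Finset.sum_subset (Finset.range_subset_range.2 h) fun k _ hk =>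
          homogeneousComponent_eq_zero k φ (by simpa using hk)).symm
    _ = φ := sum_homogeneousComponent φ

attribute [local instance] MvPolynomial.gradedAlgebra in
theorem homogeneousComponent_mul_of_mem {e : ℕ} {E : MvPolynomial σ R}
    (hE : E ∈ homogeneousSubmodule σ R e) (k : ℕ) (φ : MvPolynomial σ R) :
    homogeneousComponent k (E * φ) =
      if e ≤ k then E * homogeneousComponent (k - e) φ else 0 := by
  simp only [← decomposition.decompose'_apply]
  exact DirectSum.coe_decompose_mul_of_left_mem (𝒜 := homogeneousSubmodule σ R) k hE

end Homogeneous

section Dehomogenization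

variable {R : Type*} [CommSemiring R] {n : ℕ}

def dehomog (R : Type*) [CommSemiring R] (n : ℕ) :
    MvPolynomial (Fin (n+1)) R →ₐ[R] MvPolynomial (Fin n) R :=
  aeval (Fin.cases 1 X)

@[simp]
theorem dehomog_X_zero : dehomog R n (X 0) = 1 := by
  simp [dehomog]

@[simp]
theorem dehomog_rename_succ (f : MvPolynomial (Fin n) R) :
    dehomog R n (rename Fin.succ f) = f := by
  rw [dehomog, aeval_rename]
  exact aeval_X_left_apply f

theorem Finsupp.eq_single_zero_add_mapDomain_tail (m : Fin (n+1) →₀ ℕ) :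
    m = Finsupp.single 0 (m 0) + (Finsupp.tail m).mapDomain Fin.succ := by
  ext j
  cases j using Fin.cases with
  | zero => simp [Finsupp.mapDomain_of_notMem_range]
  | succ i =>
    simp [Finsupp.mapDomain_apply (Fin.succ_injective n), Finsupp.tail_apply,
      Finsupp.single_eq_of_ne (Fin.succ_ne_zero i)]

theorem Finsupp.degree_eq_zero_add_degree_tail (m : Fin (n+1) →₀ ℕ) :
    m.degree = m 0 + (Finsupp.tail m).degree := by
  conv_lhs => rw [Finsupp.eq_single_zero_add_mapDomain_tail m]
  rw [map_add, Finsupp.degree_single, Finsupp.degree_mapDomain]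

theorem monomial_eq_X_zero_pow_mul_rename (m : Fin (n+1) →₀ ℕ) (c : R) :
    monomial m c = X 0 ^ m 0 * rename Fin.succ (monomial (Finsupp.tail m) c) := by
  conv_lhs => rw [Finsupp.eq_single_zero_add_mapDomain_tail m]
  rw [rename_monomial, X_pow_eq_monomial, monomial_mul, one_mul]

theorem dehomog_monomial (m : Fin (n+1) →₀ ℕ) (c : R) :
    dehomog R n (monomial m c) = monomial (Finsupp.tail m) c := by
  rw [monomial_eq_X_zero_pow_mul_rename, map_mul, map_pow, dehomog_X_zero, one_pow, one_mul,
    dehomog_rename_succ]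

theorem totalDegree_dehomog_le (h : MvPolynomial (Fin (n+1)) R) :
    (dehomog R n h).totalDegree ≤ h.totalDegree := by
  conv_lhs => rw [← h.support_sum_monomial_coeff, map_sum]
  refine (totalDegree_finsetSum _ _).trans (Finset.sup_le fun m hm => ?_)
  rw [dehomog_monomial]
  calc (monomial (Finsupp.tail m) (coeff m h)).totalDegree ≤ (Finsupp.tail m).degree :=
        totalDegree_monomial_le _ _
    _ ≤ m.degree := by rw [Finsupp.degree_eq_zero_add_degree_tail m]; omega
    _ ≤ h.totalDegree := le_totalDegree hm

end Dehomogenization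

section Homogenization

variable {F : Type} [Field F] {n : ℕ}

theorem homogL_apply (d : ℕ) (f : MvPolynomial (Fin n) F) :
    homogL F n d f = ∑ k ∈ Finset.range (d+1),
      X 0 ^ (d-k) * homogeneousComponent k (rename Fin.succ f) := by
  simp [homogL, LinearMap.sum_apply]

theorem homogL_mem (d : ℕ) (f : MvPolynomial (Fin n) F) :
    homogL F n d f ∈ homogeneousSubmodule (Fin (n+1)) F d := by
  rw [homogL_apply]
  refine Submodule.sum_mem _ fun k hk => ?_
  have hX : (X 0 ^ (d-k) : MvPolynomial (Fin (n+1)) F).IsHomogeneous (d-k) := by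
    simpa using (isHomogeneous_X F (0 : Fin (n+1))).pow (d-k)
  have := hX.mul (homogeneousComponent_isHomogeneous k (rename Fin.succ f))
  rwa [Nat.sub_add_cancel (by simpa [Nat.lt_succ_iff] using hk)] at this

theorem homogL_of_isHomogeneous {d e : ℕ} {f : MvPolynomial (Fin n) F}
    (hf : f.IsHomogeneous e) (he : e ≤ d) :
    homogL F n d f = X 0 ^ (d - e) * rename Fin.succ f := by
  have hmem : rename Fin.succ f ∈ homogeneousSubmodule (Fin (n+1)) F e :=
    (mem_homogeneousSubmodule _ _).2 (hf.rename_isHomogeneous)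
  simp only [homogL_apply, homogeneousComponent_of_mem hmem, mul_ite, mul_zero]
  rw [Finset.sum_ite_eq' (Finset.range (d+1)) e, if_pos (by simp; omega)]

theorem dehomog_homogL {d : ℕ} {f : MvPolynomial (Fin n) F} (h : f.totalDegree ≤ d) :
    dehomog F n (homogL F n d f) = f := by
  simp only [homogL_apply, map_sum, map_mul, map_pow, dehomog_X_zero, one_pow, one_mul]
  rw [← map_sum, sum_range_homogeneousComponent _ ((totalDegree_rename_le _ _).trans_lt
    (Nat.lt_succ_of_le h)), dehomog_rename_succ]

theorem homogL_dehomog {d : ℕ} {h : MvPolynomial (Fin (n+1)) F}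
    (hh : h ∈ homogeneousSubmodule (Fin (n+1)) F d) : homogL F n d (dehomog F n h) = h := by
  conv_rhs => rw [← h.support_sum_monomial_coeff]
  conv_lhs => rw [← h.support_sum_monomial_coeff]
  rw [map_sum, map_sum]
  refine Finset.sum_congr rfl fun m hm => ?_
  have hdeg : m.degree = d := by
    have := (mem_homogeneousSubmodule _ _).1 hh (mem_support_iff.1 hm)
    rwa [Pi.one_def, ← Finsupp.degree_eq_weight_one] at this
  have htail := Finsupp.degree_eq_zero_add_degree_tail m
  rw [dehomog_monomial, homogL_of_isHomogeneous (isHomogeneous_monomial _ rfl) (by omega),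
    show d - (Finsupp.tail m).degree = m 0 by omega, ← monomial_eq_X_zero_pow_mul_rename]

theorem homogL_mul {d₁ d₂ : ℕ} {f g : MvPolynomial (Fin n) F}
    (h₁ : f.totalDegree ≤ d₁) (h₂ : g.totalDegree ≤ d₂) :
    homogL F n (d₁+d₂) (f*g) = homogL F n d₁ f * homogL F n d₂ g := by
  have hprod : homogL F n d₁ f * homogL F n d₂ g ∈ homogeneousSubmodule (Fin (n+1)) F (d₁+d₂) :=
    (mem_homogeneousSubmodule _ _).2 <|
      ((mem_homogeneousSubmodule _ _).1 (homogL_mem d₁ f)).mul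
        ((mem_homogeneousSubmodule _ _).1 (homogL_mem d₂ g))
  calc homogL F n (d₁+d₂) (f*g)
      = homogL F n (d₁+d₂) (dehomog F n (homogL F n d₁ f * homogL F n d₂ g)) := by
        rw [map_mul (dehomog F n), dehomog_homogL h₁, dehomog_homogL h₂]
    _ = homogL F n d₁ f * homogL F n d₂ g := homogL_dehomog hprod

end Homogenization

section Vectors

variable {F : Type} [Field F] {n p : ℕ} {a : Fin p → ℕ} {d : ℕ}

theorem mem_polyDegLE_iff {f : MvPolynomial (Fin n) F} {e : ℤ} :
    f ∈ polyDegLE F n e ↔ f = 0 ∨ (f.totalDegree : ℤ) ≤ e := by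
  constructor
  · intro hf
    refine or_iff_not_imp_left.2 fun h0 => ?_
    obtain ⟨m, hm, hmax⟩ := Finset.exists_mem_eq_sup f.support
      (support_nonempty.2 h0) fun m => m.sum fun _ e => e
    exact (congrArg ((↑) : ℕ → ℤ) hmax).trans_le (hf m hm)
  · rintro (rfl | hd) m hm
    · simp at hm
    · exact le_trans (by exact_mod_cast le_totalDegree hm) hd

theorem mem_filt_iff {f : Fin p → MvPolynomial (Fin n) F} :
    f ∈ filt F n p a d ↔ ∀ c, f c = 0 ∨ (a c ≤ d ∧ (f c).totalDegree ≤ d - a c) := by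
  simp only [filt, Submodule.mem_pi, Set.mem_univ, true_implies, mem_polyDegLE_iff]
  refine forall_congr' fun c => or_congr_right ⟨fun h => ⟨by omega, by omega⟩, fun h => by omega⟩

/-- Entrywise homogenization `S^p[-a]_{≤d} → T^p(-a)_d`. -/
def homogVec (a : Fin p → ℕ) (d : ℕ) :
    (Fin p → MvPolynomial (Fin n) F) →ₗ[F] (Fin p → MvPolynomial (Fin (n+1)) F) :=
  LinearMap.pi fun c => (homogL F n (d - a c)).comp (LinearMap.proj c)

theorem homogVec_apply (f : Fin p → MvPolynomial (Fin n) F) (c : Fin p) :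
    homogVec a d f c = homogL F n (d - a c) (f c) := rfl

theorem vecHomog_eq_homogVec {q : ℕ} :
    vecHomog F n q d = homogVec (fun _ => 0) d := rfl

/-- Membership in the degree-`d` part of `T^p(-a)`; the second clause is needed because
`d - a c` truncates. -/
def IsHomogVec (a : Fin p → ℕ) (d : ℕ) (x : Fin p → MvPolynomial (Fin (n+1)) F) : Prop :=
  ∀ c, x c ∈ homogeneousSubmodule (Fin (n+1)) F (d - a c) ∧ (d < a c → x c = 0)

theorem isHomogVec_homogVec {f : Fin p → MvPolynomial (Fin n) F} (hf : f ∈ filt F n p a d) :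
    IsHomogVec a d (homogVec a d f) := by
  refine fun c => ⟨homogL_mem _ _, fun hc => ?_⟩
  rcases mem_filt_iff.1 hf c with h0 | ⟨h1, _⟩
  · rw [homogVec_apply, h0, map_zero]
  · omega

theorem dehomog_homogVec {f : Fin p → MvPolynomial (Fin n) F} (hf : f ∈ filt F n p a d)
    (c : Fin p) : dehomog F n (homogVec a d f c) = f c := by
  rcases mem_filt_iff.1 hf c with h0 | ⟨_, h⟩
  · rw [homogVec_apply, h0, map_zero, map_zero]
  · exact dehomog_homogL h

theorem homogVec_injOn : Set.InjOn (homogVec (F := F) (n := n) a d) (filt F n p a d) :=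
  fun f hf g hg h => funext fun c => by
    rw [← dehomog_homogVec hf c, ← dehomog_homogVec hg c, h]

theorem exists_homogVec_eq {x : Fin p → MvPolynomial (Fin (n+1)) F} (hx : IsHomogVec a d x) :
    ∃ f ∈ filt F n p a d, homogVec a d f = x := by
  refine ⟨fun c => dehomog F n (x c), mem_filt_iff.2 fun c => ?_,
    funext fun c => homogL_dehomog (hx c).1⟩
  refine or_iff_not_imp_left.2 fun h0 => ⟨?_, ?_⟩
  · by_contra hlt
    exact h0 (by rw [(hx c).2 (by omega), map_zero])
  · exact (totalDegree_dehomog_le _).trans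
      ((mem_homogeneousSubmodule _ _).1 (hx c).1).totalDegree_le

def homogPart (a : Fin p → ℕ) (d : ℕ) (x : Fin p → MvPolynomial (Fin (n+1)) F) :
    Fin p → MvPolynomial (Fin (n+1)) F :=
  fun c => if a c ≤ d then homogeneousComponent (d - a c) (x c) else 0

theorem isHomogVec_homogPart (a : Fin p → ℕ) (d : ℕ) (x : Fin p → MvPolynomial (Fin (n+1)) F) :
    IsHomogVec a d (homogPart a d x) := by
  refine fun c => ⟨?_, fun hc => if_neg (by omega)⟩
  unfold homogPart
  split_ifs
  · exact homogeneousComponent_mem _ _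
  · exact zero_mem _

theorem homogPart_of_isHomogVec {x : Fin p → MvPolynomial (Fin (n+1)) F}
    (hx : IsHomogVec a d x) : homogPart a d x = x := by
  funext c
  unfold homogPart
  split_ifs with h
  · rw [homogeneousComponent_of_mem (hx c).1, if_pos rfl]
  · exact ((hx c).2 (by omega)).symm

@[simp]
theorem homogPart_zero (a : Fin p → ℕ) (d : ℕ) :
    homogPart (F := F) (n := n) a d 0 = 0 := by
  funext c
  simp [homogPart]

theorem homogPart_homogVec {f : Fin p → MvPolynomial (Fin n) F} (hf : f ∈ filt F n p a d) :
    homogPart a d (homogVec a d f) = homogVec a d f :=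
  homogPart_of_isHomogVec (isHomogVec_homogVec hf)

theorem exists_homogVec_eq_homogPart (a : Fin p → ℕ) (d : ℕ)
    (x : Fin p → MvPolynomial (Fin (n+1)) F) :
    ∃ f ∈ filt F n p a d, homogVec a d f = homogPart a d x :=
  exists_homogVec_eq (isHomogVec_homogPart a d x)

theorem sum_range_homogPart (a : Fin p → ℕ) (x : Fin p → MvPolynomial (Fin (n+1)) F) {N : ℕ}
    (hN : ∀ c, a c + (x c).totalDegree < N) :
    ∑ d ∈ Finset.range N, homogPart a d x = x := by
  funext c
  have hle : a c ≤ N := by have := hN c; omega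
  rw [Finset.sum_apply, ← Nat.add_sub_cancel' hle, Finset.sum_range_add]
  simp only [homogPart, Nat.le_add_right, if_true, Nat.add_sub_cancel_left]
  rw [Finset.sum_eq_zero fun d hd => if_neg (by simpa using hd), zero_add]
  exact sum_range_homogeneousComponent (x c) (by have := hN c; omega)

theorem exists_sum_range_homogPart (a : Fin p → ℕ) (x : Fin p → MvPolynomial (Fin (n+1)) F) :
    ∃ N, ∑ d ∈ Finset.range N, homogPart a d x = x :=
  ⟨(Finset.univ.sup fun c => a c + (x c).totalDegree) + 1, sum_range_homogPart a x fun c =>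
    Nat.lt_succ_of_le (Finset.le_sup (f := fun c => a c + (x c).totalDegree) (Finset.mem_univ c))⟩

end Vectors

section Matrices

variable {F : Type} [Field F] {n p p' p'' : ℕ} {a : Fin p → ℕ} {a' : Fin p' → ℕ}
  {a'' : Fin p'' → ℕ} {G : Matrix (Fin p) (Fin p') (MvPolynomial (Fin n) F)}
  {G' : Matrix (Fin p') (Fin p'') (MvPolynomial (Fin n) F)} {d : ℕ}

def ColDegLE (a : Fin p → ℕ) (a' : Fin p' → ℕ)
    (G : Matrix (Fin p) (Fin p') (MvPolynomial (Fin n) F)) : Prop :=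
  ∀ r c, G r c ≠ 0 → a r + (G r c).totalDegree ≤ a' c

theorem colDegLE_of_eq_colDeg (h : ∀ j, a' j = colDeg a G j) : ColDegLE a a' G := by
  intro r c hz
  rw [h c, colDeg]
  simpa only [if_neg hz] using Finset.le_sup
    (f := fun i => if G i c = 0 then 0 else a i + (G i c).totalDegree) (Finset.mem_univ r)

theorem homogMatrix_apply (r : Fin p) (c : Fin p') :
    homogMatrix F n a a' G r c = homogL F n (a' c - a r) (G r c) := rfl

theorem mulVec_mem_filt (hG : ColDegLE a a' G) {f : Fin p' → MvPolynomial (Fin n) F}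
    (hf : f ∈ filt F n p' a' d) : G *ᵥ f ∈ filt F n p a d := by
  rw [filt, Submodule.mem_pi]
  refine fun r _ => Submodule.sum_mem (polyDegLE F n _) fun c _ => ?_
  refine mem_polyDegLE_iff.2 (or_iff_not_imp_left.2 fun hz => ?_)
  beta_reduce at hz ⊢
  obtain ⟨hGz, hfz⟩ := mul_ne_zero_iff.1 hz
  have hGrc := hG r c hGz
  have hfc := (mem_filt_iff.1 hf c).resolve_left hfz
  have := totalDegree_mul (G r c) (f c)
  omega

theorem homogMatrix_mulVec_homogVec (hG : ColDegLE a a' G)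
    {f : Fin p' → MvPolynomial (Fin n) F} (hf : f ∈ filt F n p' a' d) :
    homogMatrix F n a a' G *ᵥ homogVec a' d f = homogVec a d (G *ᵥ f) := by
  funext r
  simp only [Matrix.mulVec, dotProduct, homogVec_apply, map_sum]
  refine Finset.sum_congr rfl fun c _ => ?_
  by_cases hGz : G r c = 0
  · simp [homogMatrix_apply, hGz]
  rcases mem_filt_iff.1 hf c with hfz | ⟨hc, hfc⟩
  · simp [hfz]
  have hGrc := hG r c hGz
  rw [homogMatrix_apply, show d - a r = (a' c - a r) + (d - a' c) by omega,
    homogL_mul (by omega) hfc]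

theorem homogPart_homogMatrix_mulVec (hG : ColDegLE a a' G) (d : ℕ)
    (x : Fin p' → MvPolynomial (Fin (n+1)) F) :
    homogPart a d (homogMatrix F n a a' G *ᵥ x) = homogMatrix F n a a' G *ᵥ homogPart a' d x := by
  funext r
  have hentry : ∀ c, (if a r ≤ d then
      homogeneousComponent (d - a r) (homogMatrix F n a a' G r c * x c) else 0) =
        homogMatrix F n a a' G r c * homogPart a' d x c := by
    intro c
    by_cases hGz : G r c = 0
    · simp [homogMatrix_apply, hGz]
    have hGrc := hG r c hGz
    rw [homogPart, homogMatrix_apply, homogeneousComponent_mul_of_mem (homogL_mem _ _)]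
    split_ifs <;> first | omega | rw [show d - a r - (a' c - a r) = d - a' c by omega] | simp
  calc homogPart a d (homogMatrix F n a a' G *ᵥ x) r
      = ∑ c, if a r ≤ d then
          homogeneousComponent (d - a r) (homogMatrix F n a a' G r c * x c) else 0 := by
        simp only [homogPart, Matrix.mulVec, dotProduct]
        split_ifs <;> simp [map_sum]
    _ = (homogMatrix F n a a' G *ᵥ homogPart a' d x) r := Finset.sum_congr rfl fun c _ => hentry c

theorem homogMatrix_mulVec_homogVec_eq_zero_iff (hG : ColDegLE a a' G)
    {f : Fin p' → MvPolynomial (Fin n) F} (hf : f ∈ filt F n p' a' d) :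
    homogMatrix F n a a' G *ᵥ homogVec a' d f = 0 ↔ G *ᵥ f = 0 := by
  rw [homogMatrix_mulVec_homogVec hG hf, ← map_zero (homogVec a d)]
  exact homogVec_injOn.eq_iff (mulVec_mem_filt hG hf) (zero_mem _)

theorem exists_homogVec_eq_homogPart_of_homogMatrix_mulVec_eq_zero (hG : ColDegLE a a' G)
    {x : Fin p' → MvPolynomial (Fin (n+1)) F} (hx : homogMatrix F n a a' G *ᵥ x = 0) (d : ℕ) :
    ∃ f ∈ filt F n p' a' d, homogVec a' d f = homogPart a' d x ∧ G *ᵥ f = 0 := by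
  obtain ⟨f, hf, hfx⟩ := exists_homogVec_eq_homogPart a' d x
  refine ⟨f, hf, hfx, (homogMatrix_mulVec_homogVec_eq_zero_iff hG hf).1 ?_⟩
  rw [hfx, ← homogPart_homogMatrix_mulVec hG, hx, homogPart_zero]

theorem exists_mulVec_eq_of_homogMatrix_mulVec_eq (hG : ColDegLE a a' G)
    {c : Fin p → MvPolynomial (Fin n) F} (hc : c ∈ filt F n p a d)
    {y : Fin p' → MvPolynomial (Fin (n+1)) F}
    (hy : homogMatrix F n a a' G *ᵥ y = homogVec a d c) :
    ∃ f ∈ filt F n p' a' d, G *ᵥ f = c := by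
  obtain ⟨f, hf, hfy⟩ := exists_homogVec_eq_homogPart a' d y
  refine ⟨f, hf, homogVec_injOn (mulVec_mem_filt hG hf) hc ?_⟩
  rw [← homogMatrix_mulVec_homogVec hG hf, hfy, ← homogPart_homogMatrix_mulVec hG, hy,
    homogPart_homogVec hc]

theorem homogMatrix_mulVec_homogMatrix_mulVec_eq_zero (hG : ColDegLE a a' G)
    (hG' : ColDegLE a' a'' G') (h : ∀ y, G *ᵥ (G' *ᵥ y) = 0)
    (y : Fin p'' → MvPolynomial (Fin (n+1)) F) :
    homogMatrix F n a a' G *ᵥ (homogMatrix F n a' a'' G' *ᵥ y) = 0 := by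
  obtain ⟨N, hN⟩ := exists_sum_range_homogPart a'' y
  rw [← hN, Matrix.mulVec_sum, Matrix.mulVec_sum]
  refine Finset.sum_eq_zero fun d _ => ?_
  obtain ⟨f, hf, hfy⟩ := exists_homogVec_eq_homogPart a'' d y
  rw [← hfy, homogMatrix_mulVec_homogVec hG' hf,
    homogMatrix_mulVec_homogVec hG (mulVec_mem_filt hG' hf), h, map_zero]

theorem filtered_injective_iff_homogMatrix_injective (hG : ColDegLE a a' G) :
    (∀ d : ℕ, ∀ f ∈ filt F n p' a' d, G *ᵥ f = 0 → f = 0) ↔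
      ∀ y, homogMatrix F n a a' G *ᵥ y = 0 → y = 0 := by
  constructor
  · intro h y hy
    obtain ⟨N, hN⟩ := exists_sum_range_homogPart a' y
    rw [← hN]
    refine Finset.sum_eq_zero fun d _ => ?_
    obtain ⟨f, hf, hfy, hGf⟩ :=
      exists_homogVec_eq_homogPart_of_homogMatrix_mulVec_eq_zero hG hy d
    rw [← hfy, h d f hf hGf, map_zero]
  · intro h d f hf hGf
    refine homogVec_injOn hf (zero_mem _) ?_
    rw [map_zero]
    exact h _ ((homogMatrix_mulVec_homogVec_eq_zero_iff hG hf).2 hGf)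

theorem filtered_exact_iff_homogMatrix_exact (hG : ColDegLE a a' G) (hG' : ColDegLE a' a'' G') :
    (∀ d : ℕ, ∀ f ∈ filt F n p' a' d, G *ᵥ f = 0 → ∃ y ∈ filt F n p'' a'' d, G' *ᵥ y = f) ↔
      ∀ x, homogMatrix F n a a' G *ᵥ x = 0 → ∃ y, homogMatrix F n a' a'' G' *ᵥ y = x := by
  constructor
  · intro h x hx
    obtain ⟨N, hN⟩ := exists_sum_range_homogPart a' x
    choose f hf hfx hGf using exists_homogVec_eq_homogPart_of_homogMatrix_mulVec_eq_zero hG hx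
    choose y hy hGy using fun d => h d (f d) (hf d) (hGf d)
    refine ⟨∑ d ∈ Finset.range N, homogVec a'' d (y d), ?_⟩
    rw [Matrix.mulVec_sum, ← hN]
    refine Finset.sum_congr rfl fun d _ => ?_
    rw [homogMatrix_mulVec_homogVec hG' (hy d), hGy, hfx]
  · intro h d f hf hGf
    obtain ⟨y, hy⟩ := h _ ((homogMatrix_mulVec_homogVec_eq_zero_iff hG hf).2 hGf)
    exact exists_mulVec_eq_of_homogMatrix_mulVec_eq hG' hf hy

end Matrices

section Code

variable {F : Type} [Field F] {n q p : ℕ} {a : Fin p → ℕ}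
  {G : Matrix (Fin q) (Fin p) (MvPolynomial (Fin n) F)}
  {C : Submodule (MvPolynomial (Fin n) F) (Fin q → MvPolynomial (Fin n) F)}

theorem range_homogMatrix_le_CH (hG : ColDegLE (fun _ => 0) a G)
    (hC : LinearMap.range G.mulVecLin = C) :
    (LinearMap.range (homogMatrix F n (fun _ => 0) a G).mulVecLin).restrictScalars F ≤
      CH F n q C := by
  rintro _ ⟨v, rfl⟩
  obtain ⟨N, hN⟩ := exists_sum_range_homogPart a v
  rw [Matrix.mulVecLin_apply, ← hN, Matrix.mulVec_sum]
  refine Submodule.sum_mem _ fun d _ => Submodule.mem_iSup_of_mem d ?_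
  obtain ⟨f, hf, hfv⟩ := exists_homogVec_eq_homogPart a d v
  rw [← hfv, homogMatrix_mulVec_homogVec hG hf, ← vecHomog_eq_homogVec]
  refine Submodule.mem_map_of_mem ⟨?_, mulVec_mem_filt hG hf⟩
  rw [← hC]
  exact ⟨f, rfl⟩

theorem CHd_le_range_homogMatrix_iff (hG : ColDegLE (fun _ => 0) a G) (d : ℕ) :
    CHd F n q C d ≤
        (LinearMap.range (homogMatrix F n (fun _ => 0) a G).mulVecLin).restrictScalars F ↔
      ∀ c ∈ codeLE F n q C d, ∃ f ∈ filt F n p a d, G *ᵥ f = c := by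
  constructor
  · intro h c hc
    obtain ⟨v, hv⟩ := h (Submodule.mem_map_of_mem hc)
    exact exists_mulVec_eq_of_homogMatrix_mulVec_eq hG hc.2 hv
  · rintro h _ ⟨c, hc, rfl⟩
    obtain ⟨f, hf, rfl⟩ := h c hc
    exact ⟨homogVec a d f, homogMatrix_mulVec_homogVec hG hf⟩

theorem filtered_surjective_iff_range_homogMatrix_eq_CH (hG : ColDegLE (fun _ => 0) a G)
    (hC : LinearMap.range G.mulVecLin = C) :
    (∀ d : ℕ, ∀ c ∈ codeLE F n q C d, ∃ f ∈ filt F n p a d, G *ᵥ f = c) ↔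
      (LinearMap.range (homogMatrix F n (fun _ => 0) a G).mulVecLin).restrictScalars F =
        CH F n q C := by
  rw [le_antisymm_iff, and_iff_right (range_homogMatrix_le_CH hG hC), CH, iSup_le_iff]
  exact forall_congr' fun d => (CHd_le_range_homogMatrix_iff hG d).symm

end Code

end PDProperty

open PDProperty

theorem PD_iff_homogenized_general (F : Type) [Field F] (n : ℕ)
    (l : ℕ) (hl : 1 ≤ l) (p : ℕ → ℕ)
    (G : ∀ i : ℕ, Matrix (Fin (p i)) (Fin (p (i+1))) (MvPolynomial (Fin n) F))
    (a : ∀ i : ℕ, Fin (p i) → ℕ)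
    (ha0 : ∀ j, a 0 j = 0)
    (harec : ∀ i, i + 1 ≤ l → ∀ j, a (i+1) j = colDeg (a i) (G i) j)
    (hcomplex : ∀ i, i + 2 ≤ l → ∀ y, (G i).mulVec ((G (i+1)).mulVec y) = 0)
    (C : Submodule (MvPolynomial (Fin n) F) (Fin (p 0) → MvPolynomial (Fin n) F))
    (hC : LinearMap.range (G 0).mulVecLin = C) :
    -- (a) the PD property: level-wise exactness of the filtered complex
    ((∀ d : ℕ, ∀ c ∈ codeLE F n (p 0) C (d : ℤ),
        ∃ f ∈ filt F n (p 1) (a 1) (d : ℤ), (G 0).mulVec f = c) ∧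
     (∀ d : ℕ, ∀ i, i + 2 ≤ l → ∀ f ∈ filt F n (p (i+1)) (a (i+1)) (d : ℤ),
        (G i).mulVec f = 0 →
          ∃ y ∈ filt F n (p (i+2)) (a (i+2)) (d : ℤ), (G (i+1)).mulVec y = f) ∧
     (∀ d : ℕ, ∀ i, i + 1 = l → ∀ f ∈ filt F n (p (i+1)) (a (i+1)) (d : ℤ),
        (G i).mulVec f = 0 → f = 0))
    ↔
    -- (b) `Im G₁^H = C^H` and the homogenized complex is exact
    ((Submodule.restrictScalars F
        (LinearMap.range (homogMatrix F n (a 0) (a 1) (G 0)).mulVecLin) =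
          CH F n (p 0) C) ∧
     (∀ i, i + 2 ≤ l → ∀ y,
        (homogMatrix F n (a i) (a (i+1)) (G i)).mulVec
          ((homogMatrix F n (a (i+1)) (a (i+2)) (G (i+1))).mulVec y) = 0) ∧
     (∀ i, i + 2 ≤ l → ∀ x,
        (homogMatrix F n (a i) (a (i+1)) (G i)).mulVec x = 0 →
          ∃ y, (homogMatrix F n (a (i+1)) (a (i+2)) (G (i+1))).mulVec y = x) ∧
     (∀ i, i + 1 = l → ∀ y,
        (homogMatrix F n (a i) (a (i+1)) (G i)).mulVec y = 0 → y = 0)) := by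
  have hG : ∀ i, i + 1 ≤ l → ColDegLE (a i) (a (i+1)) (G i) :=
    fun i hi => colDegLE_of_eq_colDeg (harec i hi)
  have ha0' : a 0 = fun _ => 0 := funext ha0
  have hcode := filtered_surjective_iff_range_homogMatrix_eq_CH (ha0' ▸ hG 0 hl) hC
  rw [← ha0'] at hcode
  have hcx i (hi : i + 2 ≤ l) := homogMatrix_mulVec_homogMatrix_mulVec_eq_zero
    (hG i (by omega)) (hG (i+1) (by omega)) (hcomplex i hi)
  have hexact i (hi : i + 2 ≤ l) :=
    filtered_exact_iff_homogMatrix_exact (hG i (by omega)) (hG (i+1) hi)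
  have hinj i (hi : i + 1 = l) := filtered_injective_iff_homogMatrix_injective (hG i hi.le)
  constructor
  · rintro ⟨h1, h2, h3⟩
    exact ⟨hcode.1 h1, hcx, fun i hi => (hexact i hi).1 fun d => h2 d i hi,
      fun i hi => (hinj i hi).1 fun d => h3 d i hi⟩
  · rintro ⟨h1, -, h3, h4⟩
    exact ⟨hcode.2 h1, fun d i hi => (hexact i hi).2 (h3 i hi) d,
      fun d i hi => (hinj i hi).2 (h4 i hi) d⟩

/-- Theorem 1, (a) ⇔ (b): a polynomial complex `(G_l, …, G_1)` with
column degree table `(a_l, …, a_1)` and `C = Im G₁` has the PD property if and only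
if `Im G₁^H = C^H` and the homogenized complex
`0 → T^{p_l}(−a_l) → ⋯ → T^{p_1}(−a_1) → T^q` is exact. -/
theorem PD_iff_homogenized (F : Type) [Field F] (n : ℕ)
    (l : ℕ) (hl : 1 ≤ l) (p : ℕ → ℕ)
    (G : ∀ i : ℕ, Matrix (Fin (p i)) (Fin (p (i+1))) (MvPolynomial (Fin n) F))
    (a : ∀ i : ℕ, Fin (p i) → ℕ)
    (ha0 : ∀ j, a 0 j = 0)
    (harec : ∀ i, i + 1 ≤ l → ∀ j, a (i+1) j = colDeg (a i) (G i) j)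
    (hnz : ∀ i, i + 1 ≤ l → ∀ j, ∃ r, G i r j ≠ 0)
    (hcomplex : ∀ i, i + 2 ≤ l → ∀ y, (G i).mulVec ((G (i+1)).mulVec y) = 0)
    (C : Submodule (MvPolynomial (Fin n) F) (Fin (p 0) → MvPolynomial (Fin n) F))
    (hC : LinearMap.range (G 0).mulVecLin = C) :
    -- (a) the PD property: level-wise exactness of the filtered complex
    ((∀ d : ℕ, ∀ c ∈ codeLE F n (p 0) C (d : ℤ),
        ∃ f ∈ filt F n (p 1) (a 1) (d : ℤ), (G 0).mulVec f = c) ∧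
     (∀ d : ℕ, ∀ i, i + 2 ≤ l → ∀ f ∈ filt F n (p (i+1)) (a (i+1)) (d : ℤ),
        (G i).mulVec f = 0 →
          ∃ y ∈ filt F n (p (i+2)) (a (i+2)) (d : ℤ), (G (i+1)).mulVec y = f) ∧
     (∀ d : ℕ, ∀ i, i + 1 = l → ∀ f ∈ filt F n (p (i+1)) (a (i+1)) (d : ℤ),
        (G i).mulVec f = 0 → f = 0))
    ↔
    -- (b) `Im G₁^H = C^H` and the homogenized complex is exact
    ((Submodule.restrictScalars F
        (LinearMap.range (homogMatrix F n (a 0) (a 1) (G 0)).mulVecLin) =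
          CH F n (p 0) C) ∧
     (∀ i, i + 2 ≤ l → ∀ y,
        (homogMatrix F n (a i) (a (i+1)) (G i)).mulVec
          ((homogMatrix F n (a (i+1)) (a (i+2)) (G (i+1))).mulVec y) = 0) ∧
     (∀ i, i + 2 ≤ l → ∀ x,
        (homogMatrix F n (a i) (a (i+1)) (G i)).mulVec x = 0 →
          ∃ y, (homogMatrix F n (a (i+1)) (a (i+2)) (G (i+1))).mulVec y = x) ∧
     (∀ i, i + 1 = l → ∀ y,
        (homogMatrix F n (a i) (a (i+1)) (G i)).mulVec y = 0 → y = 0)) :=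
  PD_iff_homogenized_general F n l hl p G a ha0 harec hcomplex C hC
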